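/- Let G be a finite graph and a ≥ 1 with sn(G) ≤ a, and suppose G has a tangle T of order at least 70a + 1. Let (X,Y) ∈ T be a separation of G of order exactly 70a with |Y| minimal, set W = X ∩ Y, and let H be a strongly (3|Y|, 1/35)-tame W-cloud in G[X]. Then for every balanced separation (A,B) of order at most a of the graph F = G[Y] ∪ H, we have |A ∩ X ∩ Y| ≤ a. -/

import Mathlib

/-!
Write `W = X ∩ Y` and `F = G[Y] ∪ H`. A cloud of `H` that avoids the separator `A ∩ B` is
connected in `F`, so it lies inside `A \ B` or inside `B \ A`; the clouds are disjoint, so at most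
`|A ∩ B| ≤ a` of them meet `A ∩ B`. Strong tameness makes the clouds of any `68a = (1 - 1/35) · 70a`
roots outweigh all the rest of `F`, so no balanced side can contain them. Hence each side meets `W`
in fewer than `68a + |A ∩ B|` vertices, and both corner separations `(X ∪ (B ∩ Y), A ∩ Y)` and
`(X ∪ (A ∩ Y), B ∩ Y)` of `G` have order less than `70a`. If the tangle puts `A ∩ Y` on the big
side, minimality of `|Y|` gives `Y ⊆ A`, so `A` meets all `70a` vertices of `W`, which is impossible.
If it puts `B ∩ Y` there, then `Y ⊆ B` and `A ∩ W ⊆ A ∩ B`. Otherwise `G[A ∩ Y]`, `G[B ∩ Y]` and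
`G[X]` are small sides of three members of the tangle that together cover `G`.
-/

open Finset

universe u

variable {V : Type u} [Fintype V] [DecidableEq V]

/-- `(A, B)` is a separation of the subgraph `H` of `G`: `A ∪ B` is the vertex set of `H`
and no edge of `H` has one end in `A \ B` and the other in `B \ A`.
Its order is `(A ∩ B).card`. -/
def SepOf {G : SimpleGraph V} (H : G.Subgraph) (A B : Finset V) : Prop :=
  (↑A ∪ ↑B : Set V) = H.verts ∧
    ∀ u v : V, H.Adj u v → ¬(u ∈ A \ B ∧ v ∈ B \ A)

/-- `(A, B)` is a balanced separation of the subgraph `H`: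
`|A \ B| ≤ (2/3) |V(H)|` and `|B \ A| ≤ (2/3) |V(H)|`. -/
def BalancedSepOf {G : SimpleGraph V} (H : G.Subgraph) (A B : Finset V) : Prop :=
  SepOf H A B ∧ 3 * (A \ B).card ≤ 2 * H.verts.ncard ∧ 3 * (B \ A).card ≤ 2 * H.verts.ncard

/-- The separation number of `G`: the smallest `s` such that every subgraph of `G`
has a balanced separation of order at most `s`. -/
noncomputable def sepNum (G : SimpleGraph V) : ℕ :=
  sInf {s | ∀ H : G.Subgraph, ∃ A B : Finset V, BalancedSepOf H A B ∧ (A ∩ B).card ≤ s}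

/-- `(A, B)` is a g-separation of `G`: a pair of subgraphs with `A ∪ B = G` and
`E(A) ∩ E(B) = ∅`.  Its order is `(A.verts ∩ B.verts).ncard`. -/
def IsGSep (G : SimpleGraph V) (A B : G.Subgraph) : Prop :=
  A ⊔ B = ⊤ ∧ A.edgeSet ∩ B.edgeSet = ∅

/-- `T` is a tangle of order `θ ≥ 1` in `G`. -/
def IsTangle (G : SimpleGraph V) (T : Set (G.Subgraph × G.Subgraph)) (θ : ℕ) : Prop :=
  1 ≤ θ ∧
  (∀ p ∈ T, IsGSep G p.1 p.2) ∧
  (∀ A B : G.Subgraph, IsGSep G A B → (A.verts ∩ B.verts).ncard < θ →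
    (A, B) ∈ T ∨ (B, A) ∈ T) ∧
  (∀ p₁ ∈ T, ∀ p₂ ∈ T, ∀ p₃ ∈ T, p₁.1 ⊔ p₂.1 ⊔ p₃.1 ≠ (⊤ : G.Subgraph)) ∧
  (∀ p ∈ T, p.1.verts ≠ Set.univ)

/-- The tangle number of `G`: the maximum order of a tangle in `G` (`0` if `G` has
no tangle). -/
noncomputable def tangleNum (G : SimpleGraph V) : ℕ :=
  sSup {θ | ∃ T, IsTangle G T θ}

/-- The g-separation `(G[X], G[Y] - E(G[X ∩ Y]))` associated to a separation `(X, Y)`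
of `G`; a separation `(X, Y)` belongs to a tangle `T` if this pair does. -/
def sepPair (G : SimpleGraph V) (X Y : Finset V) : G.Subgraph × G.Subgraph :=
  ((⊤ : G.Subgraph).induce ↑X,
   ((⊤ : G.Subgraph).induce ↑Y).deleteEdges ((⊤ : G.Subgraph).induce (↑X ∩ ↑Y : Set V)).edgeSet)

/-- `u` and `v` both belong to the subgraph `H` and are connected in `H`. -/
def CReach {G : SimpleGraph V} (H : G.Subgraph) (u v : V) : Prop :=
  ∃ (hu : u ∈ H.verts) (hv : v ∈ H.verts), H.coe.Reachable ⟨u, hu⟩ ⟨v, hv⟩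

/-- The vertex set of the connected component `H_w` of `H` containing `w`. -/
def cloudComp {G : SimpleGraph V} (H : G.Subgraph) (w : V) : Set V :=
  {v | CReach H w v}

/-- `n(H, U) = Σ_{w ∈ U} |V(H_w)|`. -/
noncomputable def cloudSize {G : SimpleGraph V} (H : G.Subgraph) (U : Finset V) : ℕ :=
  ∑ w ∈ U, (cloudComp H w).ncard

/-- `H` is a `W`-cloud in `G`: a forest subgraph of `G` in which every connected
component contains exactly one vertex of `W`. -/
def IsCloud (G : SimpleGraph V) (W : Finset V) (H : G.Subgraph) : Prop :=
  H.coe.IsAcyclic ∧ (↑W : Set V) ⊆ H.verts ∧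
    ∀ v ∈ H.verts, ∃! w, w ∈ W ∧ CReach H v w

/-- `H` is an `(s, ε)`-tame `W`-cloud: `n(H, U) ≥ s` for every `U ⊆ W` with
`|U| ≥ (1 - ε)|W|`. -/
def IsTameCloud (G : SimpleGraph V) (W : Finset V) (H : G.Subgraph) (s ε : ℝ) : Prop :=
  IsCloud G W H ∧
    ∀ U ⊆ W, (1 - ε) * (W.card : ℝ) ≤ (U.card : ℝ) → s ≤ (cloudSize H U : ℝ)

/-- `H` is a strongly `(s, ε)`-tame `W`-cloud: `n(H, U) ≥ s + 3 n(H, W \ U)` for every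
`U ⊆ W` with `|U| ≥ (1 - ε)|W|`. -/
def IsStronglyTameCloud (G : SimpleGraph V) (W : Finset V) (H : G.Subgraph) (s ε : ℝ) : Prop :=
  IsCloud G W H ∧
    ∀ U ⊆ W, (1 - ε) * (W.card : ℝ) ≤ (U.card : ℝ) →
      s + 3 * (cloudSize H (W \ U) : ℝ) ≤ (cloudSize H U : ℝ)

open SimpleGraph

section Separations

variable {V : Type*} [DecidableEq V] {G : SimpleGraph V}

namespace SepOf

variable {K : G.Subgraph} {A B : Finset V}

theorem symm (h : SepOf K A B) : SepOf K B A :=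
  ⟨by rw [Set.union_comm]; exact h.1, fun u v huv hc => h.2 v u huv.symm ⟨hc.2, hc.1⟩⟩

theorem mem_or_mem (h : SepOf K A B) {x : V} (hx : x ∈ K.verts) : x ∈ A ∨ x ∈ B := by
  rw [← h.1] at hx
  simpa using hx

theorem both_mem_or_both_mem_of_adj (h : SepOf K A B) {u v : V} (huv : K.Adj u v) :
    (u ∈ A ∧ v ∈ A) ∨ (u ∈ B ∧ v ∈ B) := by
  have hu := h.mem_or_mem huv.fst_mem
  have hv := h.mem_or_mem huv.snd_mem
  have huv' := h.2 u v huv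
  have hvu := h.2 v u huv.symm
  simp only [Finset.mem_sdiff] at huv' hvu
  tauto

end SepOf

theorem isGSep_sepPair {X Y : Finset V} (h : SepOf (⊤ : G.Subgraph) X Y) :
    IsGSep G (sepPair G X Y).1 (sepPair G X Y).2 := by
  refine ⟨eq_top_iff.2 ⟨fun x _ => ?_, fun u v huv => ?_⟩, ?_⟩
  · simpa [sepPair] using h.mem_or_mem (Set.mem_univ x)
  · simp only [sepPair, Subgraph.sup_adj, Subgraph.induce_adj, Subgraph.deleteEdges_adj,
      Subgraph.top_adj, Subgraph.mem_edgeSet, Set.mem_inter_iff, Finset.mem_coe] at huv ⊢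
    have := h.both_mem_or_both_mem_of_adj huv
    tauto
  · ext e
    induction e with
    | _ u v =>
      simp only [sepPair, Set.mem_inter_iff, Subgraph.mem_edgeSet, Subgraph.deleteEdges_adj,
        Subgraph.induce_adj, Subgraph.top_adj, Set.mem_inter_iff, Finset.mem_coe,
        Set.mem_empty_iff_false, iff_false]
      tauto

theorem ncard_sepPair_verts_inter (X Y : Finset V) :
    ((sepPair G X Y).1.verts ∩ (sepPair G X Y).2.verts).ncard = (X ∩ Y).card := by
  simp [sepPair, ← Finset.coe_inter, Set.ncard_coe_finset]

namespace IsTangle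

variable [Fintype V] {T : Set (G.Subgraph × G.Subgraph)} {θ : ℕ}

theorem sepPair_univ_mem (hT : IsTangle G T θ) {S : Finset V} (hS : S.card < θ) :
    sepPair G S univ ∈ T := by
  refine (hT.2.2.1 _ _ (isGSep_sepPair ⟨by simp, by simp⟩) ?_).resolve_right fun h => ?_
  · simpa [ncard_sepPair_verts_inter] using hS
  · exact hT.2.2.2.2 _ h (by simp [sepPair])

theorem sepPair_mem_or_sepPair_mem (hT : IsTangle G T θ) {X Y : Finset V}
    (h : SepOf (⊤ : G.Subgraph) X Y) (hXY : (X ∩ Y).card < θ) :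
    sepPair G X Y ∈ T ∨ sepPair G Y X ∈ T := by
  rcases hT.2.2.1 _ _ (isGSep_sepPair h) (by rwa [ncard_sepPair_verts_inter]) with hP | hP
  · exact Or.inl hP
  rcases hT.2.2.1 _ _ (isGSep_sepPair h.symm) (by rwa [ncard_sepPair_verts_inter, inter_comm])
    with hQ | hQ
  · exact Or.inr hQ
  -- `G[X ∩ Y]` carries the edges that both `G[X] - E(G[X ∩ Y])` and `G[Y] - E(G[X ∩ Y])` miss
  refine (hT.2.2.2.1 _ hP _ hQ _ (hT.sepPair_univ_mem hXY)
    (eq_top_iff.2 ⟨fun x _ => ?_, fun u v huv => ?_⟩)).elim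
  · simp [sepPair, or_comm, h.mem_or_mem (Set.mem_univ x)]
  · have := h.both_mem_or_both_mem_of_adj huv
    simp only [sepPair, Subgraph.sup_adj, Subgraph.induce_adj, Subgraph.deleteEdges_adj,
      Subgraph.top_adj, Subgraph.mem_edgeSet, Set.mem_inter_iff, Finset.mem_coe,
      Finset.coe_inter] at huv this ⊢
    tauto

end IsTangle

end Separations

section Clouds

variable {V : Type*} {G : SimpleGraph V} {H : G.Subgraph} {u v w : V}

theorem CReach.symm (h : CReach H u v) : CReach H v u :=
  ⟨h.2.1, h.1, h.2.2.symm⟩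

theorem mem_cloudComp_self (hw : w ∈ H.verts) : w ∈ cloudComp H w :=
  ⟨hw, hw, .refl _⟩

theorem cloudComp_subset_verts : cloudComp H w ⊆ H.verts :=
  fun _ hv => hv.2.1

theorem cloudSize_sdiff_add_cloudSize [DecidableEq V] {U W : Finset V} (hU : U ⊆ W) :
    cloudSize H (W \ U) + cloudSize H U = cloudSize H W :=
  Finset.sum_sdiff hU

theorem SepOf.cloudComp_subset_sdiff [DecidableEq V] {F : G.Subgraph} {A B : Finset V}
    (hAB : SepOf F A B) (hHF : H ≤ F) (hw : w ∈ A \ B)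
    (hmeet : ∀ v ∈ cloudComp H w, v ∉ A ∩ B) : cloudComp H w ⊆ ↑(A \ B) := by
  rintro v ⟨hwH, hvH, hr⟩
  suffices ∀ c : H.verts, Relation.ReflTransGen H.coe.Adj ⟨w, hwH⟩ c → (c : V) ∈ ↑(A \ B) from
    this ⟨v, hvH⟩ ((reachable_iff_reflTransGen _ _).1 hr)
  intro c hr
  induction hr with
  | refl => exact hw
  | @tail b c hwb hbc ih =>
    have hc : (c : V) ∉ A ∩ B :=
      hmeet c ⟨hwH, c.2, (reachable_iff_reflTransGen _ _).2 (hwb.tail hbc)⟩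
    have hFbc : F.Adj b c := hHF.2 hbc
    have hsep := hAB.2 b c hFbc
    have hcAB := hAB.mem_or_mem hFbc.snd_mem
    simp only [Finset.mem_inter, Finset.mem_sdiff] at ih hc hsep ⊢
    tauto

namespace IsCloud

variable {W : Finset V}

theorem eq_of_mem_cloudComp (hH : IsCloud G W H) {w₁ w₂ : V} (hw₁ : w₁ ∈ W) (hw₂ : w₂ ∈ W)
    (h₁ : v ∈ cloudComp H w₁) (h₂ : v ∈ cloudComp H w₂) : w₁ = w₂ :=
  (hH.2.2 v h₁.2.1).unique ⟨hw₁, CReach.symm h₁⟩ ⟨hw₂, CReach.symm h₂⟩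

theorem exists_mem_cloudComp (hH : IsCloud G W H) (hv : v ∈ H.verts) :
    ∃ w ∈ W, v ∈ cloudComp H w :=
  let ⟨w, ⟨hw, hvw⟩, _⟩ := hH.2.2 v hv
  ⟨w, hw, hvw.symm⟩

theorem card_le_of_forall_cloudComp_meets (hH : IsCloud G W H) {U S : Finset V} (hU : U ⊆ W)
    (hUS : ∀ w ∈ U, ∃ v ∈ cloudComp H w, v ∈ S) : U.card ≤ S.card :=
  card_le_card_of_forall_subsingleton (fun w v => v ∈ cloudComp H w)
    (fun w hw => let ⟨v, hv, hvS⟩ := hUS w hw; ⟨v, hvS, hv⟩)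
    fun _ _ _ hw₁ _ hw₂ => hH.eq_of_mem_cloudComp (hU hw₁.1) (hU hw₂.1) hw₁.2 hw₂.2

theorem exists_subset_card_inter_le [DecidableEq V] (hH : IsCloud G W H) {F : G.Subgraph}
    {A B : Finset V} (hHF : H ≤ F) (hAB : SepOf F A B) :
    ∃ U ⊆ W, (∀ w ∈ U, cloudComp H w ⊆ ↑(A \ B)) ∧ (W ∩ A).card ≤ U.card + (A ∩ B).card := by
  classical
  set U := W.filter fun w => cloudComp H w ⊆ ↑(A \ B)
  set M := W.filter fun w => ∃ v ∈ cloudComp H w, v ∈ A ∩ B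
  have hWA : W ∩ A ⊆ U ∪ M := by
    intro w hw
    obtain ⟨hwW, hwA⟩ := Finset.mem_inter.1 hw
    by_cases hm : ∃ v ∈ cloudComp H w, v ∈ A ∩ B
    · exact Finset.mem_union_right _ (Finset.mem_filter.2 ⟨hwW, hm⟩)
    replace hm : ∀ v ∈ cloudComp H w, v ∉ A ∩ B := fun v hv hvAB => hm ⟨v, hv, hvAB⟩
    have hwH : w ∈ H.verts := hH.2.1 hwW
    have hwB : w ∉ B := fun hwB => hm w (mem_cloudComp_self hwH) (Finset.mem_inter.2 ⟨hwA, hwB⟩)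
    exact Finset.mem_union_left _ (Finset.mem_filter.2
      ⟨hwW, hAB.cloudComp_subset_sdiff hHF (Finset.mem_sdiff.2 ⟨hwA, hwB⟩) hm⟩)
  refine ⟨U, Finset.filter_subset _ _, fun w hw => (Finset.mem_filter.1 hw).2, ?_⟩
  calc (W ∩ A).card ≤ (U ∪ M).card := card_le_card hWA
    _ ≤ U.card + M.card := card_union_le _ _
    _ ≤ U.card + (A ∩ B).card := Nat.add_le_add_left
      (hH.card_le_of_forall_cloudComp_meets (Finset.filter_subset _ _)
        fun w hw => (Finset.mem_filter.1 hw).2) _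

variable [Finite V]

theorem cloudSize_eq_ncard_biUnion (hH : IsCloud G W H) {U : Finset V} (hU : U ⊆ W) :
    cloudSize H U = (⋃ w ∈ U, cloudComp H w).ncard := by
  rw [← Finset.set_biUnion_coe,
    Set.Finite.ncard_biUnion U.finite_toSet (fun _ _ => Set.toFinite _), finsum_mem_coe_finset]
  · rfl
  · exact fun w₁ hw₁ w₂ hw₂ hne => Set.disjoint_left.2 fun v h₁ h₂ =>
      hne (hH.eq_of_mem_cloudComp (hU hw₁) (hU hw₂) h₁ h₂)

theorem cloudSize_le_card (hH : IsCloud G W H) {U S : Finset V} (hU : U ⊆ W)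
    (hUS : ∀ w ∈ U, cloudComp H w ⊆ ↑S) : cloudSize H U ≤ S.card := by
  rw [hH.cloudSize_eq_ncard_biUnion hU, ← Set.ncard_coe_finset S]
  exact Set.ncard_le_ncard (Set.iUnion₂_subset hUS)

theorem cloudSize_self (hH : IsCloud G W H) : cloudSize H W = H.verts.ncard := by
  rw [hH.cloudSize_eq_ncard_biUnion subset_rfl]
  congr 1
  refine (Set.iUnion₂_subset fun _ _ => cloudComp_subset_verts).antisymm fun v hv => ?_
  obtain ⟨w, hw, hvw⟩ := hH.exists_mem_cloudComp hv
  exact Set.mem_biUnion hw hvw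

end IsCloud

end Clouds

section Corners

variable {V : Type*} [DecidableEq V] {G : SimpleGraph V} {X Y A B : Finset V} {F : G.Subgraph}

theorem SepOf.corner (hXY : SepOf (⊤ : G.Subgraph) X Y) (hAB : SepOf F A B)
    (hYF : (⊤ : G.Subgraph).induce ↑Y ≤ F) : SepOf (⊤ : G.Subgraph) (X ∪ A ∩ Y) (B ∩ Y) := by
  refine ⟨Set.eq_univ_of_forall fun x => ?_, fun u v huv => ?_⟩
  · rcases hXY.mem_or_mem (Set.mem_univ x) with hx | hx
    · simp [hx]
    · have := hAB.mem_or_mem (hYF.1 hx)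
      simp only [Finset.coe_union, Finset.coe_inter, Set.mem_union, Set.mem_inter_iff,
        Finset.mem_coe]
      tauto
  · rintro ⟨hu, hv⟩
    simp only [Finset.mem_sdiff, Finset.mem_union, Finset.mem_inter] at hu hv
    have huY : u ∈ Y := by
      rcases hXY.both_mem_or_both_mem_of_adj huv with h | h <;> tauto
    have := hAB.both_mem_or_both_mem_of_adj (hYF.2 ⟨huY, hv.1.2, huv⟩)
    tauto

theorem SepOf.induce_sup_induce_sup_induce_eq_top (hXY : SepOf (⊤ : G.Subgraph) X Y)
    (hAB : SepOf F A B) (hYF : (⊤ : G.Subgraph).induce ↑Y ≤ F) :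
    (⊤ : G.Subgraph).induce ↑(A ∩ Y) ⊔ (⊤ : G.Subgraph).induce ↑(B ∩ Y) ⊔
      (⊤ : G.Subgraph).induce ↑X = ⊤ := by
  refine eq_top_iff.2 ⟨fun x _ => ?_, fun u v huv => ?_⟩
  · rcases hXY.mem_or_mem (Set.mem_univ x) with hx | hx
    · simp [hx]
    · have := hAB.mem_or_mem (hYF.1 hx)
      simp only [Subgraph.verts_sup, Subgraph.induce_verts, Finset.coe_inter, Set.mem_union,
        Set.mem_inter_iff, Finset.mem_coe]
      tauto
  · simp only [Subgraph.sup_adj, Subgraph.induce_adj, Finset.coe_inter, Set.mem_inter_iff,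
      Finset.mem_coe, Subgraph.top_adj] at huv ⊢
    rcases hXY.both_mem_or_both_mem_of_adj huv with h | h
    · exact Or.inr ⟨h.1, h.2, huv⟩
    · have := hAB.both_mem_or_both_mem_of_adj (hYF.2 ⟨h.1, h.2, huv⟩)
      tauto

theorem card_corner_le (X Y A B : Finset V) :
    ((X ∪ B ∩ Y) ∩ (A ∩ Y)).card ≤ (X ∩ Y ∩ A).card + (A ∩ B).card := by
  refine (card_le_card fun x hx => ?_).trans (card_union_le _ _)
  simp only [Finset.mem_inter, Finset.mem_union] at hx ⊢
  tauto

end Corners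

section SmallSide

variable {G : SimpleGraph V} {X Y A B : Finset V} {H : G.Subgraph} {a : ℕ}

theorem ncard_verts_induce_sup_add_card (hH : IsCloud G (X ∩ Y) H) (hHX : H.verts ⊆ ↑X) :
    ((⊤ : G.Subgraph).induce ↑Y ⊔ H).verts.ncard + (X ∩ Y).card =
      Y.card + cloudSize H (X ∩ Y) := by
  have hYH : (↑Y : Set V) ∩ H.verts = ↑(X ∩ Y) := by
    ext x
    refine ⟨fun hx => ?_, fun hx => ⟨(Finset.mem_inter.1 hx).2, hH.2.1 hx⟩⟩
    simpa [hx.1] using hHX hx.2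
  rw [Subgraph.verts_sup, Subgraph.induce_verts, hH.cloudSize_self,
    ← Set.ncard_coe_finset (X ∩ Y), ← hYH, ← Set.ncard_coe_finset Y]
  exact Set.ncard_union_add_ncard_inter _ _

theorem two_mul_ncard_verts_lt (ha : 1 ≤ a)
    (hH : IsStronglyTameCloud G (X ∩ Y) H (3 * (Y.card : ℝ)) (1 / 35)) (hHX : H.verts ⊆ ↑X)
    (hW : (X ∩ Y).card = 70 * a) {U S : Finset V} (hU : U ⊆ X ∩ Y) (hUa : 68 * a ≤ U.card)
    (hUS : ∀ w ∈ U, cloudComp H w ⊆ ↑S) :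
    2 * ((⊤ : G.Subgraph).induce ↑Y ⊔ H).verts.ncard < 3 * S.card := by
  have hcount := ncard_verts_induce_sup_add_card hH.1 hHX
  have hsplit := cloudSize_sdiff_add_cloudSize (H := H) hU
  have hS := hH.1.cloudSize_le_card hU hUS
  have htame : 3 * Y.card + 3 * cloudSize H ((X ∩ Y) \ U) ≤ cloudSize H U := by
    have hUa' : (68 * a : ℝ) ≤ U.card := by exact_mod_cast hUa
    exact_mod_cast hH.2 U hU (by rw [hW]; push_cast; linarith)
  omega

theorem card_inter_inter_lt (ha : 1 ≤ a)
    (hH : IsStronglyTameCloud G (X ∩ Y) H (3 * (Y.card : ℝ)) (1 / 35)) (hHX : H.verts ⊆ ↑X)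
    (hW : (X ∩ Y).card = 70 * a) (hAB : SepOf ((⊤ : G.Subgraph).induce ↑Y ⊔ H) A B)
    (hbal : 3 * (A \ B).card ≤ 2 * ((⊤ : G.Subgraph).induce ↑Y ⊔ H).verts.ncard) :
    (X ∩ Y ∩ A).card < 68 * a + (A ∩ B).card := by
  obtain ⟨U, hU, hUA, hcard⟩ := hH.1.exists_subset_card_inter_le le_sup_right hAB
  by_contra! h
  exact (two_mul_ncard_verts_lt ha hH hHX hW hU (by omega) hUA).not_ge hbal

end SmallSide

theorem small_side_meets_few_cut_vertices_general (G : SimpleGraph V) (a : ℕ) (ha : 1 ≤ a)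
    (T : Set (G.Subgraph × G.Subgraph)) (θ : ℕ) (hθ : 70 * a + 1 ≤ θ)
    (hT : IsTangle G T θ)
    (X Y : Finset V) (hXY : SepOf (⊤ : G.Subgraph) X Y)
    (hord : (X ∩ Y).card = 70 * a)
    (hmem : sepPair G X Y ∈ T)
    (hmin : ∀ X' Y' : Finset V, SepOf (⊤ : G.Subgraph) X' Y' →
      (X' ∩ Y').card ≤ 70 * a → sepPair G X' Y' ∈ T → Y.card ≤ Y'.card)
    (H : G.Subgraph) (hHX : H ≤ (⊤ : G.Subgraph).induce ↑X)
    (hH : IsStronglyTameCloud G (X ∩ Y) H (3 * (Y.card : ℝ)) (1 / 35))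
    (A B : Finset V)
    (hAB : BalancedSepOf ((⊤ : G.Subgraph).induce ↑Y ⊔ H) A B)
    (hABord : (A ∩ B).card ≤ a) :
    (A ∩ X ∩ Y).card ≤ a := by
  obtain ⟨hsep, hbalA, hbalB⟩ := hAB
  have hYF : (⊤ : G.Subgraph).induce ↑Y ≤ (⊤ : G.Subgraph).induce ↑Y ⊔ H := le_sup_left
  have hA := card_inter_inter_lt ha hH hHX.1 hord hsep hbalA
  have hB := card_inter_inter_lt ha hH hHX.1 hord hsep.symm hbalB
  have hCA := card_corner_le X Y A B
  have hCB := card_corner_le X Y B A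
  rw [inter_comm B A] at hB hCB
  rcases hT.sepPair_mem_or_sepPair_mem (hXY.corner hsep.symm hYF) (by omega) with hTA | hTA
  · have hYA : Y ⊆ A := inter_eq_right.1 <| eq_of_subset_of_card_le inter_subset_right <|
      hmin _ _ (hXY.corner hsep.symm hYF) (by omega) hTA
    rw [inter_eq_left.2 (inter_subset_right.trans hYA)] at hA
    omega
  rcases hT.sepPair_mem_or_sepPair_mem (hXY.corner hsep hYF) (by omega) with hTB | hTB
  · have hYB : Y ⊆ B := inter_eq_right.1 <| eq_of_subset_of_card_le inter_subset_right <|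
      hmin _ _ (hXY.corner hsep hYF) (by omega) hTB
    refine (card_le_card fun x hx => ?_).trans hABord
    simp only [Finset.mem_inter] at hx ⊢
    exact ⟨hx.1.1, hYB hx.2⟩
  · exact (hT.2.2.2.1 _ hTA _ hTB _ hmem (hXY.induce_sup_induce_sup_induce_eq_top hsep hYF)).elim

/-- If `(X, Y) ∈ T` has order exactly `70a` with `|Y|` minimal, `W = X ∩ Y`, and `H` is
a strongly `(3|Y|, 1/35)`-tame `W`-cloud in `G[X]`, then every balanced separation
`(A, B)` of `F = G[Y] ∪ H` of order at most `a` satisfies `|A ∩ X ∩ Y| ≤ a`. -/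
theorem small_side_meets_few_cut_vertices (G : SimpleGraph V) (a : ℕ) (ha : 1 ≤ a)
    (hsn : sepNum G ≤ a)
    (T : Set (G.Subgraph × G.Subgraph)) (θ : ℕ) (hθ : 70 * a + 1 ≤ θ)
    (hT : IsTangle G T θ)
    (X Y : Finset V) (hXY : SepOf (⊤ : G.Subgraph) X Y)
    (hord : (X ∩ Y).card = 70 * a)
    (hmem : sepPair G X Y ∈ T)
    (hmin : ∀ X' Y' : Finset V, SepOf (⊤ : G.Subgraph) X' Y' →
      (X' ∩ Y').card ≤ 70 * a → sepPair G X' Y' ∈ T → Y.card ≤ Y'.card)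
    (H : G.Subgraph) (hHX : H ≤ (⊤ : G.Subgraph).induce ↑X)
    (hH : IsStronglyTameCloud G (X ∩ Y) H (3 * (Y.card : ℝ)) (1 / 35))
    (A B : Finset V)
    (hAB : BalancedSepOf ((⊤ : G.Subgraph).induce ↑Y ⊔ H) A B)
    (hABord : (A ∩ B).card ≤ a) :
    (A ∩ X ∩ Y).card ≤ a :=
  small_side_meets_few_cut_vertices_general G a ha T θ hθ hT X Y hXY hord hmem hmin H hHX hH A B hAB
    hABord
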